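/- Given the MIP relaxation where burning indicators satisfy y_v ≥ 1 − a_v/H with y_v ∈ {0,1} and arrival times a_v ≤ d^r(s,v): in any optimal solution minimizing Σ_v y_v, y_v = 1 if and only if d^r(s,v) < H. Hence the MIP optimal objective with fixed protection vector r equals |{v : d^r(s,v) < H}|, the true number of burned vertices. -/

import Mathlib

open scoped ENNReal

/-- `l` is a directed path from `u` to `v` along arc relation `A`. -/
def IsPathFrom {V : Type*} (A : V → V → Prop) (u v : V) (l : List V) : Prop :=
  l.head? = some u ∧ l.getLast? = some v ∧ l.Chain' A

/-- Total cost of a path: sum of arc costs over consecutive pairs. -/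
def pathCost {V : Type*} (c : V → V → ℝ) (l : List V) : ℝ :=
  ((l.zip l.tail).map fun p => c p.1 p.2).sum

/-- Shortest-path distance from `u` to `v` (infimum of path costs, `⊤` if unreachable). -/
noncomputable def gdist {V : Type*} (A : V → V → Prop) (c : V → V → ℝ) (u v : V) : ℝ≥0∞ :=
  ⨅ l : {l : List V // IsPathFrom A u v l}, ENNReal.ofReal (pathCost c l)

open Classical in
/-- Arc costs after protecting the vertices of `P`: every outgoing arc of a
protected vertex is delayed by `Δ`. -/
noncomputable def delCost {V : Type*} (c : V → V → ℝ) (P : Set V) (Δ : ℝ) : V → V → ℝ :=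
  fun u v => c u v + (if u ∈ P then Δ else 0)

/-!
Feasible arrival times are potentials for the delayed arc costs, so `a v` is at most the cost
of every path from `s`, i.e. `a v ≤ d^r(s,v)`; hence `d^r(s,v) < H` forces `a v < H` and
`y v = 1` in every feasible solution. Conversely, by the triangle inequality for `d^r`, the
truncated distances `min (d^r(s,v), H)` are feasible arrival times with `y v = 1` exactly
when `d^r(s,v) < H`. An optimal `y` burns at least these vertices, and no more than this
feasible solution does.
-/

lemma toReal_min_le_toReal_min_add {x y M : ℝ≥0∞} {δ : ℝ} (hM : M ≠ ⊤) (hδ : 0 ≤ δ)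
    (h : y ≤ x + ENNReal.ofReal δ) :
    (min y M).toReal ≤ (min x M).toReal + δ := by
  have hfin : min x M ≠ ⊤ := ne_top_of_le_ne_top hM (min_le_right _ _)
  have key : min y M ≤ min x M + ENNReal.ofReal δ := by
    rcases le_total x M with hxM | hMx
    · rw [min_eq_left hxM]
      exact (min_le_left _ _).trans h
    · rw [min_eq_right hMx]
      exact (min_le_right _ _).trans le_self_add
  calc (min y M).toReal ≤ (min x M + ENNReal.ofReal δ).toReal :=
        ENNReal.toReal_mono (ENNReal.add_ne_top.mpr ⟨hfin, ENNReal.ofReal_ne_top⟩) key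
    _ = (min x M).toReal + δ := by
        rw [ENNReal.toReal_add hfin ENNReal.ofReal_ne_top, ENNReal.toReal_ofReal hδ]

open Finset in
lemma eq_of_imp_of_card_filter_le {V : Type*} [Fintype V] {y y' : V → Bool}
    (himp : ∀ v, y' v = true → y v = true)
    (hcard : #{v | y v = true} ≤ #{v | y' v = true}) : y = y' := by
  have heq : (filter (fun v => y' v = true) univ) = filter (fun v => y v = true) univ :=
    eq_of_subset_of_card_le (fun v => by simpa using himp v) hcard
  funext v
  simpa using (Finset.ext_iff.mp heq v).symm

lemma eq_true_of_one_sub_div_le {a H : ℝ} {b : Bool} (hH : 0 < H) (ha : a < H)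
    (hb : 1 - a / H ≤ if b then 1 else 0) : b = true := by
  have : a / H < 1 := (div_lt_one hH).mpr ha
  cases b
  · simp only [Bool.false_eq_true, if_false] at hb
    linarith
  · rfl

lemma one_sub_div_le_ite_toReal_min (x : ℝ≥0∞) {H : ℝ} (hH : 0 < H) :
    1 - (min x (ENNReal.ofReal H)).toReal / H ≤
      if decide (x < ENNReal.ofReal H) then 1 else 0 := by
  by_cases hx : x < ENNReal.ofReal H
  · simp only [hx, decide_true, if_true]
    have : 0 ≤ (min x (ENNReal.ofReal H)).toReal / H := by positivity
    linarith
  · rw [min_eq_right (not_lt.mp hx), ENNReal.toReal_ofReal hH.le, div_self hH.ne']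
    simp [hx]


section ShortestPaths

variable {V : Type*} {A : V → V → Prop} {c : V → V → ℝ}

lemma pathCost_cons_cons (c : V → V → ℝ) (x y : V) (l : List V) :
    pathCost c (x :: y :: l) = c x y + pathCost c (y :: l) := by
  simp [pathCost]

lemma pathCost_append_singleton (c : V → V → ℝ) {l : List V} {u : V}
    (hl : l.getLast? = some u) (v : V) :
    pathCost c (l ++ [v]) = pathCost c l + c u v := by
  induction l with
  | nil => simp at hl
  | cons x l ih =>
    cases l with
    | nil =>
      obtain rfl : x = u := by simpa using hl
      simp [pathCost]
    | cons y l =>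
      rw [List.cons_append, List.cons_append, pathCost_cons_cons, pathCost_cons_cons,
        ← List.cons_append, ih (by simpa using hl)]
      ring

lemma le_add_pathCost_of_isPathFrom {a : V → ℝ} (hprop : ∀ u v, A u v → a v ≤ a u + c u v)
    {l : List V} {u v : V} (hl : IsPathFrom A u v l) : a v ≤ a u + pathCost c l := by
  obtain ⟨hhead, hlast, hchain⟩ := hl
  induction l generalizing u with
  | nil => simp at hhead
  | cons x l ih =>
    obtain rfl : x = u := by simpa using hhead
    cases l with
    | nil =>
      obtain rfl : x = v := by simpa using hlast
      simp [pathCost]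
    | cons y l =>
      obtain ⟨hxy, hchain⟩ := List.isChain_cons_cons.mp hchain
      have := ih rfl (by simpa using hlast) hchain
      rw [pathCost_cons_cons]
      linarith [hprop x y hxy]

lemma ofReal_le_gdist_of_potential {a : V → ℝ} {s : V} (has : a s = 0)
    (hprop : ∀ u v, A u v → a v ≤ a u + c u v) (v : V) :
    ENNReal.ofReal (a v) ≤ gdist A c s v :=
  le_iInf fun ⟨_, hl⟩ => ENNReal.ofReal_le_ofReal <| by
    simpa [has] using le_add_pathCost_of_isPathFrom hprop hl

@[simp]
lemma gdist_self (A : V → V → Prop) (c : V → V → ℝ) (s : V) : gdist A c s s = 0 :=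
  nonpos_iff_eq_zero.mp <| iInf_le_of_le ⟨[s], rfl, rfl, List.isChain_singleton s⟩ <| by
    simp [pathCost]

lemma gdist_le_add_of_adj (s : V) {u v : V} (huv : A u v) :
    gdist A c s v ≤ gdist A c s u + ENNReal.ofReal (c u v) := by
  unfold gdist
  rw [ENNReal.iInf_add]
  refine le_iInf fun ⟨l, hhead, hlast, hchain⟩ => ?_
  have hne : l ≠ [] := by rintro rfl; simp at hhead
  have hpath : IsPathFrom A s v (l ++ [v]) := by
    refine ⟨by rwa [List.head?_append_of_ne_nil _ hne], by simp, ?_⟩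
    refine List.isChain_append.mpr ⟨hchain, List.isChain_singleton v, ?_⟩
    simp_all
  refine iInf_le_of_le ⟨l ++ [v], hpath⟩ ?_
  rw [pathCost_append_singleton c hlast]
  exact ENNReal.ofReal_add_le

lemma eq_true_of_gdist_lt {s : V} {H : ℝ} (hH : 0 < H) {a : V → ℝ} {y : V → Bool}
    (has : a s = 0) (hprop : ∀ u v, A u v → a v ≤ a u + c u v)
    (hy : ∀ v, (1 : ℝ) - a v / H ≤ (if y v then 1 else 0))
    {v : V} (hv : gdist A c s v < ENNReal.ofReal H) : y v = true := by
  have hav := (ofReal_le_gdist_of_potential has hprop v).trans_lt hv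
  exact eq_true_of_one_sub_div_le hH ((ENNReal.ofReal_lt_ofReal_iff hH).mp hav) (hy v)

end ShortestPaths

theorem mip_optimal_burned_correct_general {V : Type*} [Fintype V] (A : V → V → Prop)
    (t : V → V → ℝ) (hpos : ∀ u v, A u v → 0 < t u v)
    (s : V) (Δ H : ℝ) (hΔ : 0 ≤ Δ) (hH : 0 < H) (r : V → Bool)
    (a : V → ℝ) (y : V → Bool)
    (has : a s = 0)
    (hprop : ∀ u v, A u v → a v ≤ a u + (t u v + (if r u then Δ else 0)))
    (hy : ∀ v, (1 : ℝ) - a v / H ≤ (if y v then 1 else 0))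
    (hopt : ∀ (a' : V → ℝ) (y' : V → Bool), (∀ v, 0 ≤ a' v) → a' s = 0 →
      (∀ u v, A u v → a' v ≤ a' u + (t u v + (if r u then Δ else 0))) →
      (∀ v, (1 : ℝ) - a' v / H ≤ (if y' v then 1 else 0)) →
      (∑ v : V, (if y v then (1 : ℝ) else 0)) ≤
        ∑ v : V, (if y' v then (1 : ℝ) else 0)) :
    (∀ v : V, y v = true ↔
      gdist A (fun u w => t u w + (if r u then Δ else 0)) s v < ENNReal.ofReal H) ∧
    (∑ v : V, (if y v then (1 : ℝ) else 0)) =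
      (Set.ncard {v : V |
        gdist A (fun u w => t u w + (if r u then Δ else 0)) s v < ENNReal.ofReal H} : ℝ) := by
  set d := gdist A (fun u w => t u w + (if r u then Δ else 0)) s
  have hcost : ∀ u v, A u v → 0 ≤ t u v + (if r u then Δ else 0) := fun u v huv =>
    add_nonneg (hpos u v huv).le (by split_ifs <;> simp [hΔ])
  have hmin := hopt (fun v => (min (d v) (ENNReal.ofReal H)).toReal)
    (fun v => decide (d v < ENNReal.ofReal H)) (fun _ => ENNReal.toReal_nonneg) (by simp [d])
    (fun u v huv => toReal_min_le_toReal_min_add ENNReal.ofReal_ne_top (hcost u v huv)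
      (gdist_le_add_of_adj s huv))
    (fun v => one_sub_div_le_ite_toReal_min (d v) hH)
  have hyd : y = fun v => decide (d v < ENNReal.ofReal H) :=
    eq_of_imp_of_card_filter_le
      (fun v hv => eq_true_of_gdist_lt hH has hprop hy (by simpa using hv))
      (by simpa only [Finset.sum_boole, Nat.cast_le] using hmin)
  have hiff : ∀ v, y v = true ↔ d v < ENNReal.ofReal H := by simp [hyd]
  refine ⟨hiff, ?_⟩
  rw [Finset.sum_boole, ← Set.ncard_coe_finset]
  congr 2
  ext v
  simp [hiff]

/-- in any optimal solution of the MIP with fixed protection vector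
`r` (minimizing `Σ_v y_v` subject to `a_s = 0`, `a_v ≤ a_u + t_{uv} + Δ·r_u`,
`y_v ∈ {0,1}`, `y_v ≥ 1 − a_v/H`), we have `y_v = 1` iff `d^r(s,v) < H`; hence
the optimal objective equals the true number of burned vertices. -/
theorem mip_optimal_burned_correct {V : Type*} [Fintype V] (A : V → V → Prop)
    (t : V → V → ℝ) (hpos : ∀ u v, A u v → 0 < t u v)
    (s : V) (Δ H : ℝ) (hΔ : 0 ≤ Δ) (hH : 0 < H) (r : V → Bool)
    (a : V → ℝ) (y : V → Bool)
    (ha0 : ∀ v, 0 ≤ a v) (has : a s = 0)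
    (hprop : ∀ u v, A u v → a v ≤ a u + (t u v + (if r u then Δ else 0)))
    (hy : ∀ v, (1 : ℝ) - a v / H ≤ (if y v then 1 else 0))
    (hopt : ∀ (a' : V → ℝ) (y' : V → Bool), (∀ v, 0 ≤ a' v) → a' s = 0 →
      (∀ u v, A u v → a' v ≤ a' u + (t u v + (if r u then Δ else 0))) →
      (∀ v, (1 : ℝ) - a' v / H ≤ (if y' v then 1 else 0)) →
      (∑ v : V, (if y v then (1 : ℝ) else 0)) ≤
        ∑ v : V, (if y' v then (1 : ℝ) else 0)) :
    (∀ v : V, y v = true ↔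
      gdist A (fun u w => t u w + (if r u then Δ else 0)) s v < ENNReal.ofReal H) ∧
    (∑ v : V, (if y v then (1 : ℝ) else 0)) =
      (Set.ncard {v : V |
        gdist A (fun u w => t u w + (if r u then Δ else 0)) s v < ENNReal.ofReal H} : ℝ) :=
  mip_optimal_burned_correct_general A t hpos s Δ H hΔ hH r a y has hprop hy hopt
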